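/- Let G = (V,E) be a finite simple connected graph with N vertices and at least one edge, and n ≥ 1 an integer. Define U(K) = Z̃_n(u_1(K),...,u_n(K)) and V(K) = Z̃_n(u_1^*(K),...,u_n^*(K)) for K ∈ (0,∞). Then there exists a unique function d : (0,∞) → (0,∞) such that V(K) = U(d(K)) for all K > 0; moreover d is strictly decreasing, d(K) → ∞ as K → 0⁺, and d(K) → 0 as K → ∞. -/

import Mathlib

open Finset Real Filter

/-- Number of replicas (out of `n`) in which the spins at `i` and `j` are antiparallel. -/
def antiCount {V : Type*} (n : ℕ) (S : V → Fin n → Bool) (i j : V) : ℕ :=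
  (Finset.univ.filter fun a : Fin n => S i a ≠ S j a).card

theorem antiCount_symm {V : Type*} (n : ℕ) (S : V → Fin n → Bool) (i j : V) :
    antiCount n S i j = antiCount n S j i := by
  unfold antiCount
  congr 1
  apply Finset.filter_congr
  intro a _
  exact ne_comm

/-- The normalized replicated partition function
`Z̃_n(u) = Σ_S Π_{{i,j} ∈ E} u_{k(S,{i,j})}`, where the sum runs over all spin
configurations `S : V → {-1,+1}^n`, `k(S,{i,j})` is the number of replicas in which
the spins at `i` and `j` are antiparallel, and `u : ℕ → ℝ` gives the normalized
edge Boltzmann factors (with the convention `u 0 = 1`). -/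
noncomputable def Ztilde {V : Type*} [Fintype V] [DecidableEq V] (G : SimpleGraph V)
    [DecidableRel G.Adj] (n : ℕ) (u : ℕ → ℝ) : ℝ :=
  ∑ S : V → Fin n → Bool, ∏ e ∈ G.edgeFinset,
    Sym2.lift ⟨fun i j => u (antiCount n S i j),
      fun i j => congrArg u (antiCount_symm n S i j)⟩ e

/-- The normalized edge Boltzmann factor on the Nishimori line,
`u_k(K) = cosh((n+1-2k)K) / cosh((n+1)K)` (note `u_0(K) = 1`). -/
noncomputable def uNL (n k : ℕ) (K : ℝ) : ℝ :=
  cosh (((n : ℝ) + 1 - 2 * k) * K) / cosh (((n : ℝ) + 1) * K)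

/-- The normalized dual edge Boltzmann factor on the Nishimori line:
`u_k^*(K) = (tanh K)^{k+1}` for `k` odd and `(tanh K)^k` for `k` even
(note `u_0^*(K) = 1`). -/
noncomputable def uStarNL (k : ℕ) (K : ℝ) : ℝ :=
  if Odd k then (tanh K) ^ (k + 1) else (tanh K) ^ k

/-- `U(K) = Z̃_n(u_1(K),…,u_n(K))` on the Nishimori line. -/
noncomputable def Ufun {V : Type*} [Fintype V] [DecidableEq V] (G : SimpleGraph V)
    [DecidableRel G.Adj] (n : ℕ) (K : ℝ) : ℝ :=
  Ztilde G n (fun k => uNL n k K)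

/-- `V(K) = Z̃_n(u_1^*(K),…,u_n^*(K))` on the Nishimori line. -/
noncomputable def Vfun {V : Type*} [Fintype V] [DecidableEq V] (G : SimpleGraph V)
    [DecidableRel G.Adj] (n : ℕ) (K : ℝ) : ℝ :=
  Ztilde G n (fun k => uStarNL k K)


set_option maxHeartbeats 1000000

lemma two_cosh_mul (a b : ℝ) : 2 * (cosh a * cosh b) = cosh (a+b) + cosh (a-b) := by
  rw [Real.cosh_add, Real.cosh_sub]; ring

lemma two_sinh_mul (a b : ℝ) : 2 * (sinh a * cosh b) = sinh (a+b) + sinh (a-b) := by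
  rw [Real.sinh_add, Real.sinh_sub]; ring

lemma cosh_ratio_strict {b c x y : ℝ} (hc : 0 ≤ c) (hcb : c < b) (hx : 0 ≤ x) (hxy : x < y) :
    cosh (c*y) * cosh (b*x) < cosh (c*x) * cosh (b*y) := by
  have hb : 0 < b := lt_of_le_of_lt hc hcb
  have hy : 0 < y := lt_of_le_of_lt hx hxy
  have h1 : cosh (c*y + b*x) < cosh (c*x + b*y) := by
    rw [Real.cosh_lt_cosh]
    rw [abs_of_nonneg (by nlinarith), abs_of_nonneg (by nlinarith)]
    nlinarith
  have h2 : cosh (c*y - b*x) ≤ cosh (c*x - b*y) := by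
    rw [Real.cosh_le_cosh]
    have habs : |c*x - b*y| = b*y - c*x := by
      rw [abs_of_nonpos (by nlinarith)]; ring
    rw [habs, abs_le]
    constructor <;> nlinarith
  nlinarith [two_cosh_mul (c*y) (b*x), two_cosh_mul (c*x) (b*y)]

lemma tanh_lt_tanh {x y : ℝ} (h : x < y) : tanh x < tanh y := by
  rw [Real.tanh_eq_sinh_div_cosh, Real.tanh_eq_sinh_div_cosh,
    div_lt_div_iff₀ (Real.cosh_pos x) (Real.cosh_pos y)]
  have h1 := two_sinh_mul x y
  have h2 := two_sinh_mul y x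
  rw [add_comm y x] at h2
  have h3 : sinh (x - y) < sinh (y - x) := Real.sinh_lt_sinh.2 (by linarith)
  linarith

lemma tanh_pos' {x : ℝ} (hx : 0 < x) : 0 < tanh x := by
  rw [Real.tanh_eq_sinh_div_cosh]
  exact div_pos (Real.sinh_pos_iff.2 hx) (Real.cosh_pos x)

lemma tanh_nonneg' {x : ℝ} (hx : 0 ≤ x) : 0 ≤ tanh x := by
  rcases eq_or_lt_of_le hx with h | h
  · simp [← h]
  · exact (tanh_pos' h).le

lemma tanh_lt_one' (x : ℝ) : tanh x < 1 := by
  rw [Real.tanh_eq_sinh_div_cosh, div_lt_one (Real.cosh_pos x)]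
  exact Real.sinh_lt_cosh x

lemma tanh_eq_exp (x : ℝ) : tanh x = (1 - exp (-(2*x)))/(1 + exp (-(2*x))) := by
  have h1 : exp x * exp (-x) = 1 := by rw [← Real.exp_add]; simp
  have h3 : exp (-(2*x)) = exp (-x) * exp (-x) := by rw [← Real.exp_add]; ring_nf
  rw [Real.tanh_eq_sinh_div_cosh, Real.sinh_eq, Real.cosh_eq, h3]
  have p1 : (0:ℝ) < exp x + exp (-x) := by positivity
  have p2 : (0:ℝ) < 1 + exp (-x) * exp (-x) := by positivity
  field_simp
  ring_nf
  nlinarith [h1]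

lemma tendsto_tanh_atTop' : Tendsto tanh atTop (nhds 1) := by
  have hlin : Tendsto (fun x : ℝ => -(2*x)) atTop atBot := by
    have : Tendsto (fun x : ℝ => (2:ℝ)*x) atTop atTop :=
      Tendsto.const_mul_atTop (by norm_num) tendsto_id
    exact tendsto_neg_atTop_atBot.comp this
  have hexp : Tendsto (fun x : ℝ => exp (-(2*x))) atTop (nhds 0) :=
    Real.tendsto_exp_atBot.comp hlin
  have : Tendsto (fun x : ℝ => (1 - exp (-(2*x)))/(1 + exp (-(2*x)))) atTop (nhds 1) := by
    have h1 : Tendsto (fun x : ℝ => 1 - exp (-(2*x))) atTop (nhds (1 - 0)) :=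
      tendsto_const_nhds.sub hexp
    have h2 : Tendsto (fun x : ℝ => 1 + exp (-(2*x))) atTop (nhds (1 + 0)) :=
      tendsto_const_nhds.add hexp
    have := Tendsto.div h1 h2 (show (1:ℝ)+0 ≠ 0 by norm_num)
    rw [sub_zero, add_zero, div_one] at this; exact this
  simpa [← tanh_eq_exp] using this

lemma continuous_tanh' : Continuous Real.tanh := by
  have : Real.tanh = fun x => sinh x / cosh x := funext Real.tanh_eq_sinh_div_cosh
  rw [this]
  exact Real.continuous_sinh.div Real.continuous_cosh fun x => (Real.cosh_pos x).ne'

lemma cosh_ratio_tendsto {a b : ℝ} (h : |a| < b) :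
    Tendsto (fun K => cosh (a*K)/cosh (b*K)) atTop (nhds 0) := by
  have hb : 0 < b := lt_of_le_of_lt (abs_nonneg a) h
  have hlin : Tendsto (fun K : ℝ => (|a| - b)*K) atTop atBot := by
    have h' : Tendsto (fun K : ℝ => (b - |a|)*K) atTop atTop :=
      Tendsto.const_mul_atTop (by linarith) tendsto_id
    have h2 := tendsto_neg_atTop_atBot.comp h'
    have : (fun K : ℝ => (|a| - b)*K) = fun K : ℝ => -((b - |a|)*K) := by
      funext K; ring
    rw [this]; exact h2
  have hexp : Tendsto (fun K : ℝ => 2 * exp ((|a| - b)*K)) atTop (nhds 0) := by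
    have := (Real.tendsto_exp_atBot.comp hlin).const_mul (2:ℝ)
    simpa using this
  apply tendsto_of_tendsto_of_tendsto_of_le_of_le' tendsto_const_nhds hexp
  · exact Eventually.of_forall fun K => (div_pos (Real.cosh_pos _) (Real.cosh_pos _)).le
  · filter_upwards [eventually_ge_atTop (0:ℝ)] with K hK
    have hnum : cosh (a*K) ≤ exp (|a| * K) := by
      rw [Real.cosh_eq]
      have e1 : exp (a*K) ≤ exp (|a| * K) := Real.exp_le_exp.2 (by
        have : a*K ≤ |a| * K := mul_le_mul_of_nonneg_right (le_abs_self a) hK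
        exact this)
      have e2 : exp (-(a*K)) ≤ exp (|a| * K) := Real.exp_le_exp.2 (by
        have : -(a*K) = (-a)*K := by ring
        rw [this]
        exact mul_le_mul_of_nonneg_right (neg_le_abs a) hK)
      linarith
    have hden : exp (b*K) / 2 ≤ cosh (b*K) := by
      rw [Real.cosh_eq]
      have := (Real.exp_pos (-(b*K))).le
      linarith
    have hdpos : (0:ℝ) < exp (b*K)/2 := by positivity
    calc cosh (a*K)/cosh (b*K) ≤ exp (|a| * K) / (exp (b*K)/2) := by
          apply div_le_div₀ (Real.exp_pos _).le hnum hdpos hden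
      _ = 2 * exp ((|a| - b)*K) := by
          rw [sub_mul, Real.exp_sub]; field_simp

-- ### uNL lemmas

lemma uNL_pos (n k : ℕ) (K : ℝ) : 0 < uNL n k K :=
  div_pos (Real.cosh_pos _) (Real.cosh_pos _)

lemma uNL_zero (n k : ℕ) : uNL n k 0 = 1 := by
  simp [uNL]

lemma uNL_k0 (n : ℕ) (K : ℝ) : uNL n 0 K = 1 := by
  unfold uNL
  norm_num
  exact (Real.cosh_pos _).ne'

lemma uNL_abs_lt {n k : ℕ} (hk1 : 1 ≤ k) (hkn : k ≤ n) :
    |((n : ℝ) + 1 - 2 * k)| < (n : ℝ) + 1 := by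
  have h1 : (1:ℝ) ≤ (k:ℝ) := by exact_mod_cast hk1
  have h2 : (k:ℝ) ≤ (n:ℝ) := by exact_mod_cast hkn
  rw [abs_lt]
  constructor <;> nlinarith

lemma uNL_strict_anti {n k : ℕ} (hk1 : 1 ≤ k) (hkn : k ≤ n) {x y : ℝ}
    (hx : 0 ≤ x) (hxy : x < y) : uNL n k y < uNL n k x := by
  unfold uNL
  rw [div_lt_div_iff₀ (Real.cosh_pos _) (Real.cosh_pos _)]
  set a : ℝ := (n : ℝ) + 1 - 2 * k with ha
  set b : ℝ := (n : ℝ) + 1 with hb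
  have habs : |a| < b := uNL_abs_lt hk1 hkn
  have hy : 0 ≤ y := le_trans hx hxy.le
  have e1 : cosh (a * y) = cosh (|a| * y) := by
    rw [← Real.cosh_abs (a * y), ← Real.cosh_abs (|a| * y), abs_mul, abs_mul, abs_abs]
  have e2 : cosh (a * x) = cosh (|a| * x) := by
    rw [← Real.cosh_abs (a * x), ← Real.cosh_abs (|a| * x), abs_mul, abs_mul, abs_abs]
  rw [e1, e2]
  exact cosh_ratio_strict (abs_nonneg a) habs hx hxy

lemma uNL_le {n k : ℕ} (hkn : k ≤ n) {x y : ℝ} (hx : 0 ≤ x) (hxy : x < y) :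
    uNL n k y ≤ uNL n k x := by
  rcases Nat.eq_zero_or_pos k with h | h
  · subst h; rw [uNL_k0, uNL_k0]
  · exact (uNL_strict_anti h hkn hx hxy).le

lemma uNL_tendsto_atTop {n k : ℕ} (hk1 : 1 ≤ k) (hkn : k ≤ n) :
    Tendsto (uNL n k) atTop (nhds 0) := by
  exact cosh_ratio_tendsto (uNL_abs_lt hk1 hkn)

lemma continuous_uNL (n k : ℕ) : Continuous (uNL n k) := by
  unfold uNL
  exact (Real.continuous_cosh.comp (continuous_const.mul continuous_id)).div
    (Real.continuous_cosh.comp (continuous_const.mul continuous_id))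
    fun x => (Real.cosh_pos _).ne'

-- ### uStarNL lemmas

lemma uStarNL_nonneg (k : ℕ) {K : ℝ} (hK : 0 ≤ K) : 0 ≤ uStarNL k K := by
  unfold uStarNL; split_ifs <;> exact pow_nonneg (tanh_nonneg' hK) _

lemma uStarNL_pos (k : ℕ) {K : ℝ} (hK : 0 < K) : 0 < uStarNL k K := by
  unfold uStarNL; split_ifs <;> exact pow_pos (tanh_pos' hK) _

lemma uStarNL_le (k : ℕ) {x y : ℝ} (hx : 0 ≤ x) (hxy : x < y) :
    uStarNL k x ≤ uStarNL k y := by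
  have h1 : tanh x ≤ tanh y := (tanh_lt_tanh hxy).le
  have h0 : 0 ≤ tanh x := tanh_nonneg' hx
  unfold uStarNL; split_ifs <;> exact pow_le_pow_left₀ h0 h1 _

lemma uStarNL_strict {k : ℕ} (hk : 1 ≤ k) {x y : ℝ} (hx : 0 ≤ x) (hxy : x < y) :
    uStarNL k x < uStarNL k y := by
  have h1 : tanh x < tanh y := tanh_lt_tanh hxy
  have h0 : 0 ≤ tanh x := tanh_nonneg' hx
  unfold uStarNL
  split_ifs with h
  · exact pow_lt_pow_left₀ h1 h0 (Nat.succ_ne_zero k)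
  · exact pow_lt_pow_left₀ h1 h0 (by omega)

lemma uStarNL_zero (k : ℕ) : uStarNL k 0 = if k = 0 then 1 else 0 := by
  unfold uStarNL
  rw [Real.tanh_zero]
  rcases Nat.eq_zero_or_pos k with h | h
  · subst h; norm_num
  · have hk : k ≠ 0 := h.ne'
    simp only [hk, if_false]
    split_ifs <;> exact zero_pow (by omega)

lemma uStarNL_tendsto_atTop (k : ℕ) : Tendsto (uStarNL k) atTop (nhds 1) := by
  unfold uStarNL
  split_ifs with h
  · simpa using tendsto_tanh_atTop'.pow (k+1)
  · simpa using tendsto_tanh_atTop'.pow k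

lemma continuous_uStarNL (k : ℕ) : Continuous (uStarNL k) := by
  unfold uStarNL
  split_ifs <;> exact continuous_tanh'.pow _

-- ### Ztilde lemmas

section Z
variable {V : Type*} [Fintype V] [DecidableEq V] (G : SimpleGraph V) [DecidableRel G.Adj]
  (n : ℕ)

def edgeFun (n : ℕ) (u : ℕ → ℝ) (S : V → Fin n → Bool) : Sym2 V → ℝ :=
  Sym2.lift ⟨fun i j => u (antiCount n S i j),
    fun i j => congrArg u (antiCount_symm n S i j)⟩

lemma Ztilde_eq (u : ℕ → ℝ) :
    Ztilde G n u = ∑ S : V → Fin n → Bool, ∏ e ∈ G.edgeFinset, edgeFun n u S e := rfl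

lemma edgeFun_mk (u : ℕ → ℝ) (S : V → Fin n → Bool) (i j : V) :
    edgeFun n u S s(i, j) = u (antiCount n S i j) := rfl

lemma antiCount_le (S : V → Fin n → Bool) (i j : V) : antiCount n S i j ≤ n :=
  le_trans (Finset.card_filter_le _ _) (by simp)

lemma edgeFun_nonneg {u : ℕ → ℝ} (hu : ∀ k, k ≤ n → 0 ≤ u k) (S : V → Fin n → Bool)
    (e : Sym2 V) : 0 ≤ edgeFun n u S e := by
  induction e using Sym2.ind with
  | _ i j => rw [edgeFun_mk]; exact hu _ (antiCount_le n S i j)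

lemma edgeFun_pos {u : ℕ → ℝ} (hu : ∀ k, k ≤ n → 0 < u k) (S : V → Fin n → Bool)
    (e : Sym2 V) : 0 < edgeFun n u S e := by
  induction e using Sym2.ind with
  | _ i j => rw [edgeFun_mk]; exact hu _ (antiCount_le n S i j)

lemma edgeFun_le {u v : ℕ → ℝ} (h : ∀ k, k ≤ n → v k ≤ u k) (S : V → Fin n → Bool)
    (e : Sym2 V) : edgeFun n v S e ≤ edgeFun n u S e := by
  induction e using Sym2.ind with
  | _ i j => rw [edgeFun_mk, edgeFun_mk]; exact h _ (antiCount_le n S i j)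

lemma edgeFun_tendsto {l : Filter ℝ} {u : ℕ → ℝ → ℝ} {w : ℕ → ℝ}
    (h : ∀ k, k ≤ n → Tendsto (u k) l (nhds (w k))) (S : V → Fin n → Bool) (e : Sym2 V) :
    Tendsto (fun K => edgeFun n (fun k => u k K) S e) l (nhds (edgeFun n w S e)) := by
  induction e using Sym2.ind with
  | _ i j =>
    simp only [edgeFun_mk]
    exact h _ (antiCount_le n S i j)

lemma Ztilde_le {u v : ℕ → ℝ} (hv0 : ∀ k, k ≤ n → 0 ≤ v k)
    (hle : ∀ k, k ≤ n → v k ≤ u k) : Ztilde G n v ≤ Ztilde G n u := by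
  rw [Ztilde_eq, Ztilde_eq]
  refine Finset.sum_le_sum fun S _ => ?_
  exact Finset.prod_le_prod (fun e _ => edgeFun_nonneg n hv0 S e)
    (fun e _ => edgeFun_le n hle S e)

lemma Ztilde_lt (hE : G.edgeFinset.Nonempty) (hn : 1 ≤ n) {u v : ℕ → ℝ}
    (hv0 : ∀ k, k ≤ n → 0 ≤ v k) (hle : ∀ k, k ≤ n → v k ≤ u k)
    (hu : ∀ k, k ≤ n → 0 < u k) (hsn : v n < u n) :
    Ztilde G n v < Ztilde G n u := by
  obtain ⟨e₀, he₀⟩ := hE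
  revert he₀
  refine Sym2.ind (fun i₀ j₀ he₀ => ?_) e₀
  have hadj : G.Adj i₀ j₀ := by
    rwa [SimpleGraph.mem_edgeFinset, SimpleGraph.mem_edgeSet] at he₀
  have hne : j₀ ≠ i₀ := hadj.ne'
  set S₀ : V → Fin n → Bool := fun v _ => decide (v = i₀) with hS₀
  have hcount : antiCount n S₀ i₀ j₀ = n := by
    unfold antiCount
    rw [Finset.filter_true_of_mem, Finset.card_univ, Fintype.card_fin]
    intro a _
    simp [hS₀, hne]
  rw [Ztilde_eq, Ztilde_eq]
  refine Finset.sum_lt_sum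
    (fun S _ => Finset.prod_le_prod (fun e _ => edgeFun_nonneg n hv0 S e)
      (fun e _ => edgeFun_le n hle S e)) ⟨S₀, Finset.mem_univ _, ?_⟩
  rw [← Finset.mul_prod_erase _ _ he₀, ← Finset.mul_prod_erase _ _ he₀]
  have hP : ∏ e ∈ G.edgeFinset.erase s(i₀, j₀), edgeFun n v S₀ e ≤
      ∏ e ∈ G.edgeFinset.erase s(i₀, j₀), edgeFun n u S₀ e :=
    Finset.prod_le_prod (fun e _ => edgeFun_nonneg n hv0 S₀ e)
      (fun e _ => edgeFun_le n hle S₀ e)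
  have hPpos : 0 < ∏ e ∈ G.edgeFinset.erase s(i₀, j₀), edgeFun n u S₀ e :=
    Finset.prod_pos fun e _ => edgeFun_pos n hu S₀ e
  rw [edgeFun_mk, edgeFun_mk, hcount]
  calc v n * ∏ e ∈ G.edgeFinset.erase s(i₀, j₀), edgeFun n v S₀ e
      ≤ v n * ∏ e ∈ G.edgeFinset.erase s(i₀, j₀), edgeFun n u S₀ e :=
        mul_le_mul_of_nonneg_left hP (hv0 n le_rfl)
    _ < u n * ∏ e ∈ G.edgeFinset.erase s(i₀, j₀), edgeFun n u S₀ e :=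
        mul_lt_mul_of_pos_right hsn hPpos

lemma Ztilde_tendsto {l : Filter ℝ} {u : ℕ → ℝ → ℝ} {w : ℕ → ℝ}
    (h : ∀ k, k ≤ n → Tendsto (u k) l (nhds (w k))) :
    Tendsto (fun K => Ztilde G n (fun k => u k K)) l (nhds (Ztilde G n w)) := by
  simp only [Ztilde_eq]
  exact tendsto_finset_sum _ fun S _ => tendsto_finset_prod _ fun e _ =>
    edgeFun_tendsto n h S e

end Z
-- ### limit-matching lemmas

lemma uNL_tendsto_uStar (n k : ℕ) (hk : k ≤ n) :
    Tendsto (uNL n k) atTop (nhds (uStarNL k 0)) := by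
  rcases Nat.eq_zero_or_pos k with h | h
  · subst h
    have he : uNL n 0 = fun _ : ℝ => (1:ℝ) := funext fun K => uNL_k0 n K
    rw [he, uStarNL_zero, if_pos rfl]
    exact tendsto_const_nhds
  · rw [uStarNL_zero, if_neg h.ne']
    exact uNL_tendsto_atTop h hk

lemma uStar_tendsto_uNL (n k : ℕ) : Tendsto (uStarNL k) atTop (nhds (uNL n k 0)) := by
  rw [uNL_zero]; exact uStarNL_tendsto_atTop k


/-- Theorem 1 of the paper: there exists a function `d : (0,∞) → (0,∞)`, unique as a
map on `(0,∞)`, such that `V(K) = U(d(K))` for all `K > 0`; moreover `d` is strictly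
decreasing on `(0,∞)`, `d(K) → ∞` as `K → 0⁺`, and `d(K) → 0` as `K → ∞`. -/
theorem exists_unique_duality_map {V : Type*} [Fintype V] [DecidableEq V]
    (G : SimpleGraph V) [DecidableRel G.Adj] (hG : G.Connected)
    (hE : G.edgeFinset.Nonempty) (n : ℕ) (hn : 1 ≤ n) :
    ∃ d : ℝ → ℝ,
      (∀ K, 0 < K → 0 < d K) ∧
      (∀ K, 0 < K → Vfun G n K = Ufun G n (d K)) ∧
      (∀ d' : ℝ → ℝ, (∀ K, 0 < K → 0 < d' K) →
        (∀ K, 0 < K → Vfun G n K = Ufun G n (d' K)) →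
        ∀ K, 0 < K → d' K = d K) ∧
      StrictAntiOn d (Set.Ioi 0) ∧
      Tendsto d (nhdsWithin 0 (Set.Ioi 0)) atTop ∧
      Tendsto d atTop (nhds 0) := by
  classical
  -- strict monotonicity of U and V
  have hUanti : StrictAntiOn (Ufun G n) (Set.Ici 0) := by
    intro x hx y hy hxy
    exact Ztilde_lt G n hE hn (fun k _ => (uNL_pos n k y).le)
      (fun k hk => uNL_le hk hx hxy) (fun k _ => uNL_pos n k x)
      (uNL_strict_anti hn le_rfl hx hxy)
  have hVmono : StrictMonoOn (Vfun G n) (Set.Ici 0) := by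
    intro x hx y hy hxy
    exact Ztilde_lt G n hE hn (fun k _ => uStarNL_nonneg k hx)
      (fun k _ => uStarNL_le k hx hxy)
      (fun k _ => uStarNL_pos k (lt_of_le_of_lt hx hxy))
      (uStarNL_strict hn hx hxy)
  have hUle : ∀ a b : ℝ, 0 ≤ a → a ≤ b → Ufun G n b ≤ Ufun G n a := by
    intro a b ha hab
    rcases eq_or_lt_of_le hab with h | h
    · rw [h]
    · exact (hUanti ha (le_trans ha hab) h).le
  have hVle : ∀ a b : ℝ, 0 ≤ a → a ≤ b → Vfun G n a ≤ Vfun G n b := by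
    intro a b ha hab
    rcases eq_or_lt_of_le hab with h | h
    · rw [h]
    · exact (hVmono ha (le_trans ha hab) h).le
  -- B < A
  have hBA : Vfun G n 0 < Ufun G n 0 := by
    refine Ztilde_lt G n hE hn (fun k _ => uStarNL_nonneg k le_rfl) ?_ ?_ ?_
    · intro k _
      rw [uNL_zero, uStarNL_zero]
      split_ifs <;> norm_num
    · intro k _; rw [uNL_zero]; exact one_pos
    · rw [uNL_zero, uStarNL_zero, if_neg (by omega)]; exact one_pos
  -- continuity
  have hUcont : Continuous (Ufun G n) := by
    rw [continuous_iff_continuousAt]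
    intro x
    exact Ztilde_tendsto G n (fun k _ => (continuous_uNL n k).tendsto x)
  have hVcont : Continuous (Vfun G n) := by
    rw [continuous_iff_continuousAt]
    intro x
    exact Ztilde_tendsto G n (fun k _ => (continuous_uStarNL k).tendsto x)
  -- limits at infinity
  have hUtop : Tendsto (Ufun G n) atTop (nhds (Vfun G n 0)) :=
    Ztilde_tendsto G n fun k hk => uNL_tendsto_uStar n k hk
  have hVtop : Tendsto (Vfun G n) atTop (nhds (Ufun G n 0)) :=
    Ztilde_tendsto G n fun k _ => uStar_tendsto_uNL n k
  -- pointwise bounds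
  have hUltA : ∀ K : ℝ, 0 < K → Ufun G n K < Ufun G n 0 := fun K hK =>
    hUanti (Set.mem_Ici.mpr le_rfl) (Set.mem_Ici.mpr hK.le) hK
  have hBltU : ∀ K : ℝ, 0 < K → Vfun G n 0 < Ufun G n K := by
    intro K hK
    have h1 : Vfun G n 0 ≤ Ufun G n (K + 1) := by
      refine le_of_tendsto hUtop ?_
      filter_upwards [eventually_ge_atTop (K + 1)] with x hx
      exact hUle (K + 1) x (by linarith) hx
    have h2 : Ufun G n (K + 1) < Ufun G n K :=
      hUanti (Set.mem_Ici.mpr hK.le) (Set.mem_Ici.mpr (by linarith)) (by linarith)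
    linarith
  have hVltA : ∀ K : ℝ, 0 < K → Vfun G n K < Ufun G n 0 := by
    intro K hK
    have h1 : Vfun G n (K + 1) ≤ Ufun G n 0 := by
      refine ge_of_tendsto hVtop ?_
      filter_upwards [eventually_ge_atTop (K + 1)] with x hx
      exact hVle (K + 1) x (by linarith) hx
    have h2 : Vfun G n K < Vfun G n (K + 1) :=
      hVmono (Set.mem_Ici.mpr hK.le) (Set.mem_Ici.mpr (by linarith)) (by linarith)
    linarith
  have hBltV : ∀ K : ℝ, 0 < K → Vfun G n 0 < Vfun G n K := fun K hK =>
    hVmono (Set.mem_Ici.mpr le_rfl) (Set.mem_Ici.mpr hK.le) hK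
  -- surjectivity of U onto (B, A)
  have hsurj : ∀ y : ℝ, Vfun G n 0 < y → y < Ufun G n 0 →
      ∃ L, 0 < L ∧ Ufun G n L = y := by
    intro y hBy hyA
    have hev : ∀ᶠ x in atTop, Ufun G n x < y := hUtop.eventually (eventually_lt_nhds hBy)
    obtain ⟨b, hby, hb1⟩ := (hev.and (eventually_ge_atTop 1)).exists
    have hc : ContinuousAt (Ufun G n) 0 := hUcont.continuousAt
    have hev0 : ∀ᶠ x in nhds 0, y < Ufun G n x := hc.eventually (eventually_gt_nhds hyA)
    have hmem : ∀ᶠ x in nhdsWithin (0:ℝ) (Set.Ioi 0), x ∈ Set.Ioi (0:ℝ) :=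
      self_mem_nhdsWithin
    obtain ⟨a, hya, ha⟩ :=
      ((hev0.filter_mono nhdsWithin_le_nhds).and hmem).exists
    have ha0 : 0 < a := ha
    have hab : a < b := by
      by_contra hle
      push_neg at hle
      have := hUle b a (by linarith) hle
      linarith
    obtain ⟨L, hL, hLy⟩ := intermediate_value_Icc' hab.le hUcont.continuousOn
      (Set.mem_Icc.mpr ⟨hby.le, hya.le⟩)
    exact ⟨L, lt_of_lt_of_le ha0 hL.1, hLy⟩
  have hchoice : ∀ K : ℝ, 0 < K → ∃ L, 0 < L ∧ Ufun G n L = Vfun G n K := fun K hK =>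
    hsurj _ (hBltV K hK) (hVltA K hK)
  have hchoice' : ∀ K : ℝ, ∃ L, 0 < K → (0 < L ∧ Ufun G n L = Vfun G n K) := by
    intro K
    by_cases hK : 0 < K
    · obtain ⟨L, hL1, hL2⟩ := hchoice K hK
      exact ⟨L, fun _ => ⟨hL1, hL2⟩⟩
    · exact ⟨1, fun h => absurd h hK⟩
  choose d hdspec using hchoice'
  have hdpos : ∀ K, 0 < K → 0 < d K := fun K hK => (hdspec K hK).1
  have hdeq : ∀ K, 0 < K → Ufun G n (d K) = Vfun G n K := fun K hK => (hdspec K hK).2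
  have hkey : ∀ K, 0 < K → ∀ L, 0 < L → Ufun G n L = Vfun G n K → L = d K := by
    intro K hK L hL hLK
    refine hUanti.injOn (Set.mem_Ici.mpr hL.le) (Set.mem_Ici.mpr (hdpos K hK).le) ?_
    rw [hLK, hdeq K hK]
  refine ⟨d, hdpos, fun K hK => (hdeq K hK).symm, ?_, ?_, ?_, ?_⟩
  · intro d' hd'pos hd'eq K hK
    exact hkey K hK (d' K) (hd'pos K hK) (hd'eq K hK).symm
  · -- strict anti
    intro x hx y hy hxy
    have hx0 : 0 < x := hx
    have hy0 : 0 < y := hy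
    have hV : Ufun G n (d x) < Ufun G n (d y) := by
      rw [hdeq x hx0, hdeq y hy0]
      exact hVmono (Set.mem_Ici.mpr hx0.le) (Set.mem_Ici.mpr hy0.le) hxy
    by_contra hcon
    push_neg at hcon
    have := hUle (d x) (d y) (hdpos x hx0).le hcon
    linarith
  · -- tendsto atTop at 0+
    rw [tendsto_atTop]
    intro M
    have hM' : 0 < max M 1 := lt_of_lt_of_le one_pos (le_max_right M 1)
    have hUB : Vfun G n 0 < Ufun G n (max M 1) := hBltU _ hM'
    have hev : ∀ᶠ K in nhds (0:ℝ), Vfun G n K < Ufun G n (max M 1) := by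
      have hc : ContinuousAt (Vfun G n) 0 := hVcont.continuousAt
      exact hc.eventually (eventually_lt_nhds hUB)
    filter_upwards [hev.filter_mono nhdsWithin_le_nhds, self_mem_nhdsWithin] with K h1 h2
    have hK : 0 < K := h2
    have h3 : Ufun G n (d K) < Ufun G n (max M 1) := by rw [hdeq K hK]; exact h1
    have h4 : max M 1 ≤ d K := by
      by_contra hcon
      push_neg at hcon
      have := hUanti (Set.mem_Ici.mpr (hdpos K hK).le) (Set.mem_Ici.mpr hM'.le) hcon
      linarith
    exact le_trans (le_max_left M 1) h4
  · -- tendsto nhds 0 at atTop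
    rw [tendsto_order]
    constructor
    · intro a ha
      filter_upwards [eventually_gt_atTop (0:ℝ)] with K hK
      exact lt_trans (by simpa using ha) (hdpos K hK)
    · intro ε hε
      have hεpos : 0 < ε := by simpa using hε
      have hUε : Ufun G n ε < Ufun G n 0 := hUltA ε hεpos
      have hev : ∀ᶠ K in atTop, Ufun G n ε < Vfun G n K :=
        hVtop.eventually (eventually_gt_nhds hUε)
      filter_upwards [hev, eventually_gt_atTop (0:ℝ)] with K h1 hK
      by_contra hcon
      push_neg at hcon
      have h2 := hUle ε (d K) hεpos.le hcon
      rw [hdeq K hK] at h2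
      linarith
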